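/- arXiv:1712.01124 — 2 statements merged into one kernel-verified Lean document; each statement's English description precedes it below -/
import Mathlib

section
/- Let s ∈ (0,1), N > 2s, and let (u_n) be bounded in H^s(ℝ^N) with u_n → u in L²(B) for every ball B ⊂ ℝ^N, for some u ∈ H^s(ℝ^N). For each R > 0 let ψ_R : ℝ^N → [0,1] be a smooth function with ψ_R = 0 on B_{R/2}(0), ψ_R = 1 on ℝ^N \ B_R(0), and |∇ψ_R| ≤ C/R for a constant C independent of R. Then lim_{R→∞} limsup_{n→∞} ∫∫_{ℝ^N×ℝ^N} u_n(x)² |ψ_R(x) − ψ_R(y)|² / |x−y|^{N+2s} dx dy = 0. -/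
open MeasureTheory Filter Topology

noncomputable section

abbrev E (N : ℕ) := EuclideanSpace ℝ (Fin N)

/-- Gagliardo seminorm squared `[u]²`. -/
def gag (N : ℕ) (s : ℝ) (u : E N → ℝ) : ℝ :=
  ∫ x, ∫ y, (u x - u y) ^ 2 / ‖x - y‖ ^ ((N : ℝ) + 2 * s)

/-- `u ∈ H^s(ℝ^N)` : `u ∈ L²` and the Gagliardo integrand is integrable. -/
def memHs (N : ℕ) (s : ℝ) (u : E N → ℝ) : Prop :=
  MemLp u 2 (volume : Measure (E N)) ∧
  Integrable (fun p : E N × E N =>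
    (u p.1 - u p.2) ^ 2 / ‖p.1 - p.2‖ ^ ((N : ℝ) + 2 * s)) volume

section Aux

open Metric Module
open scoped ENNReal NNReal

lemma nontrivial_E (N : ℕ) (hN : 0 < N) : Nontrivial (E N) := by
  have : Nonempty (Fin N) := ⟨⟨0, hN⟩⟩
  infer_instance

lemma integrableOn_rpow_norm_ball (N : ℕ) (hN : 0 < N) {a : ℝ} (ha : -(N : ℝ) < a) :
    IntegrableOn (fun z : E N => ‖z‖ ^ a) (ball (0 : E N) 1) volume := by
  have := nontrivial_E N hN
  have hmeas : AEStronglyMeasurable (fun z : E N => ‖z‖ ^ a) volume := by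
    apply Measurable.aestronglyMeasurable; fun_prop
  rcases le_or_gt 0 a with h0 | h0
  · refine Measure.integrableOn_of_bounded (M := 1) measure_ball_lt_top.ne hmeas ?_
    filter_upwards [ae_restrict_mem measurableSet_ball] with z hz
    rw [Real.norm_eq_abs, abs_of_nonneg (Real.rpow_nonneg (norm_nonneg _) _)]
    exact Real.rpow_le_one (norm_nonneg _) (mem_ball_zero_iff.1 hz).le h0
  · refine ⟨hmeas.restrict, ?_⟩
    rw [hasFiniteIntegral_iff_ofReal
      (Eventually.of_forall fun z => Real.rpow_nonneg (norm_nonneg _) _)]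
    set t : ℝ := 1 / 2 with htdef
    have ht0 : (0 : ℝ) < t := by norm_num
    have ht1 : t < 1 := by norm_num
    set A : ℕ → Set (E N) := fun k => ball (0 : E N) (t ^ k) \ ball 0 (t ^ (k + 1)) with hA
    have hcover : ball (0 : E N) 1 ⊆ {0} ∪ ⋃ k, A k := by
      intro z hz
      rcases eq_or_ne z 0 with rfl | hz0
      · exact Or.inl rfl
      right
      have hz1 : ‖z‖ < 1 := mem_ball_zero_iff.1 hz
      have hzpos : 0 < ‖z‖ := norm_pos_iff.2 hz0
      have hex : ∃ m, t ^ m ≤ ‖z‖ := by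
        obtain ⟨n, hn⟩ := exists_pow_lt_of_lt_one hzpos ht1
        exact ⟨n, hn.le⟩
      set m := Nat.find hex with hm
      have hm1 : 0 < m := by
        rcases Nat.eq_zero_or_pos m with h | h
        · exfalso
          have := Nat.find_spec hex
          rw [← hm, h, pow_zero] at this
          linarith
        · exact h
      refine Set.mem_iUnion.2 ⟨m - 1, ?_⟩
      constructor
      · exact mem_ball_zero_iff.2 (lt_of_not_ge (Nat.find_min hex (Nat.sub_lt hm1 one_pos)))
      · intro hmem
        have hsucc : m - 1 + 1 = m := Nat.succ_pred_eq_of_pos hm1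
        have := mem_ball_zero_iff.1 hmem
        rw [hsucc] at this
        exact absurd (Nat.find_spec hex) (not_le.2 this)
    have hAm : ∀ k, MeasurableSet (A k) := fun k =>
      measurableSet_ball.diff measurableSet_ball
    set q : ℝ≥0∞ := ENNReal.ofReal (t ^ (a + N)) with hqdef
    set D : ℝ≥0∞ := ENNReal.ofReal (t ^ a) * volume (ball (0 : E N) 1) with hDdef
    have hball_fin : volume (ball (0 : E N) 1) < ⊤ := measure_ball_lt_top
    have hterm : ∀ k : ℕ, ∫⁻ z in A k, ENNReal.ofReal (‖z‖ ^ a) ≤ D * q ^ k := by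
      intro k
      have htk : (0 : ℝ) < t ^ (k + 1) := pow_pos ht0 _
      have h1 : ∫⁻ z in A k, ENNReal.ofReal (‖z‖ ^ a)
          ≤ ∫⁻ _ in A k, ENNReal.ofReal ((t ^ (k + 1)) ^ a) := by
        refine setLIntegral_mono' (hAm k) fun z hz => ?_
        refine ENNReal.ofReal_le_ofReal ?_
        have hzl : t ^ (k + 1) ≤ ‖z‖ := by
          have := hz.2
          simpa [mem_ball_zero_iff, not_lt] using this
        exact Real.rpow_le_rpow_of_nonpos htk hzl h0.le
      have h2 : (∫⁻ _ in A k, ENNReal.ofReal ((t ^ (k + 1)) ^ a) : ℝ≥0∞)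
          = ENNReal.ofReal ((t ^ (k + 1)) ^ a) * volume (A k) := setLIntegral_const _ _
      have h3 : volume (A k) ≤ ENNReal.ofReal ((t ^ k) ^ N) * volume (ball (0 : E N) 1) := by
        calc volume (A k) ≤ volume (ball (0 : E N) (t ^ k)) := measure_mono Set.diff_subset
          _ = ENNReal.ofReal ((t ^ k) ^ finrank ℝ (E N)) * volume (ball (0 : E N) 1) :=
            Measure.addHaar_ball _ _ (pow_nonneg ht0.le _)
          _ = ENNReal.ofReal ((t ^ k) ^ N) * volume (ball (0 : E N) 1) := by
            rw [finrank_euclideanSpace_fin]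
      have hck : ((t ^ (k + 1)) ^ a) * ((t ^ k) ^ N : ℝ) = t ^ a * (t ^ (a + N)) ^ k := by
        have e1 : ((t ^ (k + 1) : ℝ)) ^ a = t ^ (((k : ℝ) + 1) * a) := by
          rw [← Real.rpow_natCast t (k + 1), ← Real.rpow_mul ht0.le]
          push_cast
          ring_nf
        have e2 : ((t ^ k : ℝ)) ^ (N : ℕ) = t ^ ((k : ℝ) * N) := by
          rw [← pow_mul, ← Real.rpow_natCast t (k * N)]
          push_cast
          ring_nf
        have e3 : ((t ^ (a + N) : ℝ)) ^ k = t ^ ((a + N) * k) := by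
          rw [← Real.rpow_natCast (t ^ (a + N)) k, ← Real.rpow_mul ht0.le]
        rw [e1, e2, e3, ← Real.rpow_add ht0, ← Real.rpow_add ht0]
        congr 1
        ring
      calc ∫⁻ z in A k, ENNReal.ofReal (‖z‖ ^ a)
          ≤ ENNReal.ofReal ((t ^ (k + 1)) ^ a) * volume (A k) := h1.trans h2.le
        _ ≤ ENNReal.ofReal ((t ^ (k + 1)) ^ a) *
            (ENNReal.ofReal ((t ^ k) ^ N) * volume (ball (0 : E N) 1)) := by
            gcongr
        _ = D * q ^ k := by
            rw [hDdef, hqdef, ← mul_assoc, ← ENNReal.ofReal_mul (Real.rpow_nonneg htk.le _),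
              hck, ENNReal.ofReal_mul (Real.rpow_nonneg ht0.le _),
              ← ENNReal.ofReal_pow (Real.rpow_nonneg ht0.le _)]
            ring
    have hq1 : q < 1 := by
      rw [hqdef]
      refine ENNReal.ofReal_lt_one.2 ?_
      exact Real.rpow_lt_one ht0.le ht1 (by linarith)
    calc ∫⁻ z in ball (0 : E N) 1, ENNReal.ofReal (‖z‖ ^ a)
        ≤ ∫⁻ z in ({0} ∪ ⋃ k, A k : Set (E N)), ENNReal.ofReal (‖z‖ ^ a) :=
          lintegral_mono_set hcover
      _ ≤ (∫⁻ z in ({0} : Set (E N)), ENNReal.ofReal (‖z‖ ^ a))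
          + ∫⁻ z in (⋃ k, A k), ENNReal.ofReal (‖z‖ ^ a) := lintegral_union_le _ _ _
      _ ≤ 0 + ∑' k, ∫⁻ z in A k, ENNReal.ofReal (‖z‖ ^ a) := by
          gcongr
          · exact (setLIntegral_measure_zero _ _ (measure_singleton _)).le
          · exact lintegral_iUnion_le _ _
      _ ≤ 0 + ∑' k, D * q ^ k := by
          gcongr
          exact hterm _
      _ = D * (1 - q)⁻¹ := by rw [zero_add, ENNReal.tsum_mul_left, ENNReal.tsum_geometric]
      _ < ⊤ := by
          refine ENNReal.mul_lt_top ?_ ?_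
          · exact ENNReal.mul_lt_top ENNReal.ofReal_lt_top hball_fin
          · exact ENNReal.inv_lt_top.2 (tsub_pos_iff_lt.2 hq1)


lemma integrableOn_rpow_norm_compl_ball (N : ℕ) {q : ℝ} (hq : (N : ℝ) < q) :
    IntegrableOn (fun z : E N => ‖z‖ ^ (-q)) (ball (0 : E N) 1)ᶜ volume := by
  have hInt : Integrable (fun z : E N => (2 : ℝ) ^ q * (1 + ‖z‖) ^ (-q)) volume := by
    refine Integrable.const_mul ?_ _
    exact integrable_one_add_norm (by rwa [finrank_euclideanSpace_fin])
  refine (hInt.integrableOn).mono' ?_ ?_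
  · exact (Measurable.aestronglyMeasurable (by fun_prop)).restrict
  filter_upwards [ae_restrict_mem measurableSet_ball.compl] with z hz
  have h1 : 1 ≤ ‖z‖ := by
    have := hz
    simp only [Set.mem_compl_iff, mem_ball_zero_iff, not_lt] at this
    exact this
  have hz0 : (0 : ℝ) < ‖z‖ := lt_of_lt_of_le one_pos h1
  rw [Real.norm_eq_abs, abs_of_nonneg (Real.rpow_nonneg (norm_nonneg _) _)]
  have key : (1 + ‖z‖) ≤ 2 * ‖z‖ := by linarith
  have e1 : ‖z‖ ^ (-q) = (2 : ℝ) ^ q * (2 * ‖z‖) ^ (-q) := by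
    rw [Real.mul_rpow (by norm_num) (norm_nonneg _), ← mul_assoc,
      ← Real.rpow_add (by norm_num : (0:ℝ) < 2), add_neg_cancel, Real.rpow_zero, one_mul]
  rw [e1]
  refine mul_le_mul_of_nonneg_left ?_ (Real.rpow_nonneg (by norm_num) _)
  exact Real.rpow_le_rpow_of_nonpos (by linarith) key (by linarith)

lemma integrable_G (N : ℕ) (hN : 0 < N) (s Cc : ℝ) (hs0 : 0 < s) (hs1 : s < 1)
    (hsN : 2 * s < (N : ℝ)) :
    Integrable (fun w : E N => min (Cc ^ 2 * ‖w‖ ^ 2) 1 / ‖w‖ ^ ((N : ℝ) + 2 * s))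
      volume := by
  have := by
    have : Nonempty (Fin N) := ⟨⟨0, hN⟩⟩
    exact (inferInstance : Nontrivial (E N))
  set p : ℝ := (N : ℝ) + 2 * s with hp
  have hp0 : (0 : ℝ) < p := by positivity
  have hmaj : Integrable
      ((Set.indicator (ball (0 : E N) 1) fun w => Cc ^ 2 * ‖w‖ ^ (2 - p)) +
        Set.indicator (ball (0 : E N) 1)ᶜ fun w => ‖w‖ ^ (-p)) volume := by
    refine Integrable.add ?_ ?_
    · refine IntegrableOn.integrable_indicator ?_ measurableSet_ball
      exact (integrableOn_rpow_norm_ball N hN (a := 2 - p) (by push_cast; linarith)).const_mul _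
    · refine IntegrableOn.integrable_indicator ?_ measurableSet_ball.compl
      exact integrableOn_rpow_norm_compl_ball N (by push_cast; linarith)
  refine hmaj.mono' (Measurable.aestronglyMeasurable (by fun_prop)) ?_
  refine Eventually.of_forall fun w => ?_
  have hnn : (0 : ℝ) ≤ min (Cc ^ 2 * ‖w‖ ^ 2) 1 := le_min (by positivity) one_pos.le
  rw [Real.norm_eq_abs, abs_of_nonneg (div_nonneg hnn (Real.rpow_nonneg (norm_nonneg _) _))]
  rcases lt_or_ge ‖w‖ 1 with hw | hw
  · have hmem : w ∈ ball (0 : E N) 1 := mem_ball_zero_iff.2 hw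
    rw [Pi.add_apply, Set.indicator_of_mem hmem, Set.indicator_of_notMem (by simpa using hmem),
      add_zero]
    rcases eq_or_ne w 0 with rfl | hw0
    · have : ‖(0 : E N)‖ = 0 := norm_zero
      rw [this]
      rw [Real.zero_rpow hp0.ne']
      simp only [ne_eq, OfNat.ofNat_ne_zero, not_false_eq_true, zero_pow, mul_zero,
        div_zero]
      positivity
    · have hwpos : (0 : ℝ) < ‖w‖ := norm_pos_iff.2 hw0
      have hdpos : (0 : ℝ) < ‖w‖ ^ p := Real.rpow_pos_of_pos hwpos _
      calc min (Cc ^ 2 * ‖w‖ ^ 2) 1 / ‖w‖ ^ p ≤ (Cc ^ 2 * ‖w‖ ^ 2) / ‖w‖ ^ p :=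
            (div_le_div_iff_of_pos_right hdpos).2 (min_le_left _ _)
        _ = Cc ^ 2 * ‖w‖ ^ (2 - p) := by
            rw [mul_div_assoc]
            congr 1
            rw [← Real.rpow_natCast ‖w‖ 2, ← Real.rpow_sub hwpos]
            norm_num
  · have hmem : w ∉ ball (0 : E N) 1 := by simp [mem_ball_zero_iff, not_lt, hw]
    rw [Pi.add_apply, Set.indicator_of_notMem hmem, Set.indicator_of_mem (by simpa using hmem),
      zero_add]
    have hwpos : (0 : ℝ) < ‖w‖ := lt_of_lt_of_le one_pos hw
    have hdpos : (0 : ℝ) < ‖w‖ ^ p := Real.rpow_pos_of_pos hwpos _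
    calc min (Cc ^ 2 * ‖w‖ ^ 2) 1 / ‖w‖ ^ p ≤ 1 / ‖w‖ ^ p :=
          (div_le_div_iff_of_pos_right hdpos).2 (min_le_right _ _)
      _ = ‖w‖ ^ (-p) := by rw [Real.rpow_neg (norm_nonneg _), one_div]


end Aux

/-- Vanishing of the nonlocal cutoff cross term: for a bounded sequence in
`H^s(ℝ^N)` converging locally in `L²`, and cutoffs `ψ_R` as described,
`lim_{R→∞} limsup_n ∫∫ u_n(x)² |ψ_R(x) − ψ_R(y)|²/|x−y|^{N+2s} = 0`. -/
theorem stmt10 (N : ℕ) (s : ℝ) (hs : s ∈ Set.Ioo (0 : ℝ) 1) (hN : 2 * s < (N : ℝ))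
    (u : ℕ → E N → ℝ) (v : E N → ℝ)
    (hmem : ∀ n, memHs N s (u n)) (hvmem : memHs N s v)
    (hbdd : ∃ C : ℝ, ∀ n, gag N s (u n) + ∫ x, (u n x) ^ 2 ≤ C)
    (hloc : ∀ (y : E N) (r : ℝ), 0 < r →
      Tendsto (fun n => ∫ x in Metric.ball y r, (u n x - v x) ^ 2) atTop (𝓝 0))
    (ψ : ℝ → E N → ℝ) (C : ℝ)
    (hψsm : ∀ R > (0 : ℝ), ContDiff ℝ (⊤ : ℕ∞) (ψ R))
    (hψ01 : ∀ R > (0 : ℝ), ∀ x, ψ R x ∈ Set.Icc (0 : ℝ) 1)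
    (hψ0 : ∀ R > (0 : ℝ), ∀ x ∈ Metric.ball (0 : E N) (R / 2), ψ R x = 0)
    (hψ1 : ∀ R > (0 : ℝ), ∀ x ∉ Metric.ball (0 : E N) R, ψ R x = 1)
    (hψgrad : ∀ R > (0 : ℝ), ∀ x, ‖fderiv ℝ (ψ R) x‖ ≤ C / R) :
    Tendsto (fun R : ℝ => Filter.limsup (fun n =>
        ∫ x, ∫ y, (u n x) ^ 2 * (ψ R x - ψ R y) ^ 2 / ‖x - y‖ ^ ((N : ℝ) + 2 * s))
      atTop) atTop (𝓝 0) := by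
  obtain ⟨hs0, hs1⟩ := hs
  obtain ⟨C₀, hC₀⟩ := hbdd
  have hNpos : 0 < N := by
    have h1 : (0 : ℝ) < (N : ℝ) := by linarith
    exact_mod_cast h1
  set p : ℝ := (N : ℝ) + 2 * s with hp
  have hp0 : (0 : ℝ) < p := by positivity
  -- the reference integrable profile
  set G : E N → ℝ := fun w => min (C ^ 2 * ‖w‖ ^ 2) 1 / ‖w‖ ^ p with hG
  have hGint : Integrable G volume := integrable_G N hNpos s C hs0 hs1 hN
  set S : ℝ := ∫ w, G w with hS
  have hS0 : 0 ≤ S := integral_nonneg fun w =>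
    div_nonneg (le_min (by positivity) one_pos.le) (Real.rpow_nonneg (norm_nonneg _) _)
  -- nonnegativity of the double integrals
  have hΦnn : ∀ (R : ℝ) (n : ℕ),
      0 ≤ ∫ x, ∫ y, (u n x) ^ 2 * (ψ R x - ψ R y) ^ 2 / ‖x - y‖ ^ p :=
    fun R n => integral_nonneg fun x => integral_nonneg fun y => by positivity
  -- the L² bound
  have hu2 : ∀ n, ∫ x, (u n x) ^ 2 ≤ C₀ := by
    intro n
    have h1 := hC₀ n
    have h2 : 0 ≤ gag N s (u n) :=
      integral_nonneg fun x => integral_nonneg fun y => by positivity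
    linarith
  -- key quantitative bound, for every R > 0
  have key : ∀ R > (0 : ℝ), ∀ n,
      (∫ x, ∫ y, (u n x) ^ 2 * (ψ R x - ψ R y) ^ 2 / ‖x - y‖ ^ p)
        ≤ C₀ * S * R ^ (-(2 * s)) := by
    intro R hR n
    set g : E N → ℝ := fun z => min ((C / R) ^ 2 * ‖z‖ ^ 2) 1 / ‖z‖ ^ p with hg
    have hRp : (0 : ℝ) < R ^ p := Real.rpow_pos_of_pos hR _
    have hgeq : g = fun z => R ^ (-p) * G (R⁻¹ • z) := by
      funext z
      have hnrm : ‖R⁻¹ • z‖ = R⁻¹ * ‖z‖ := by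
        rw [norm_smul, Real.norm_eq_abs, abs_of_pos (inv_pos.2 hR)]
      have hm : min (C ^ 2 * ‖R⁻¹ • z‖ ^ 2) 1 = min ((C / R) ^ 2 * ‖z‖ ^ 2) 1 := by
        rw [hnrm]
        congr 1
        field_simp
      have hden : ‖R⁻¹ • z‖ ^ p = (R ^ p)⁻¹ * ‖z‖ ^ p := by
        rw [hnrm, Real.mul_rpow (inv_nonneg.2 hR.le) (norm_nonneg _),
          Real.inv_rpow hR.le]
      show min ((C / R) ^ 2 * ‖z‖ ^ 2) 1 / ‖z‖ ^ p
          = R ^ (-p) * (min (C ^ 2 * ‖R⁻¹ • z‖ ^ 2) 1 / ‖R⁻¹ • z‖ ^ p)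
      rw [hm, hden]
      rcases eq_or_ne (‖z‖) 0 with hz | hz
      · simp [hz, Real.zero_rpow hp0.ne']
      · have hzp : ‖z‖ ^ p ≠ 0 := (Real.rpow_pos_of_pos
          (lt_of_le_of_ne (norm_nonneg _) (Ne.symm hz)) _).ne'
        rw [Real.rpow_neg hR.le]
        field_simp
    have hgint : Integrable g volume := by
      rw [hgeq]
      exact (hGint.comp_smul (inv_ne_zero hR.ne')).const_mul _
    have hgval : ∫ z, g z = R ^ (-(2 * s)) * S := by
      rw [hgeq]
      rw [integral_const_mul]
      rw [Measure.integral_comp_inv_smul_of_nonneg volume G hR.le]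
      rw [finrank_euclideanSpace_fin, smul_eq_mul, ← mul_assoc]
      congr 1
      rw [← Real.rpow_natCast R N, ← Real.rpow_add hR]
      congr 1
      rw [hp]
      push_cast
      ring
    -- inner integral bound
    have inner_le : ∀ x : E N,
        (∫ y, (ψ R x - ψ R y) ^ 2 / ‖x - y‖ ^ p) ≤ R ^ (-(2 * s)) * S := by
      intro x
      have hle : ∀ y, (ψ R x - ψ R y) ^ 2 / ‖x - y‖ ^ p ≤ g (x - y) := by
        intro y
        have hnum : (ψ R x - ψ R y) ^ 2 ≤ min ((C / R) ^ 2 * ‖x - y‖ ^ 2) 1 := by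
          refine le_min ?_ ?_
          · have hdiff : ∀ z : E N, DifferentiableAt ℝ (ψ R) z :=
              fun z => ((hψsm R hR).differentiable (by simp)).differentiableAt
            have hlip := convex_univ.norm_image_sub_le_of_norm_fderiv_le
              (f := ψ R) (fun z _ => hdiff z) (fun z _ => hψgrad R hR z)
              (Set.mem_univ y) (Set.mem_univ x)
            have h2 : |ψ R x - ψ R y| ≤ (C / R) * ‖x - y‖ := by
              simpa [Real.norm_eq_abs] using hlip
            calc (ψ R x - ψ R y) ^ 2 = |ψ R x - ψ R y| ^ 2 := (sq_abs _).symm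
              _ ≤ ((C / R) * ‖x - y‖) ^ 2 :=
                  pow_le_pow_left₀ (abs_nonneg _) h2 2
              _ = (C / R) ^ 2 * ‖x - y‖ ^ 2 := mul_pow _ _ 2
          · have h01x := hψ01 R hR x
            have h01y := hψ01 R hR y
            have habs : |ψ R x - ψ R y| ≤ 1 :=
              abs_le.2 ⟨by linarith [h01x.1, h01y.2], by linarith [h01x.2, h01y.1]⟩
            calc (ψ R x - ψ R y) ^ 2 = |ψ R x - ψ R y| ^ 2 := (sq_abs _).symm
              _ ≤ 1 ^ 2 := pow_le_pow_left₀ (abs_nonneg _) habs 2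
              _ = 1 := one_pow 2
        rcases eq_or_ne (‖x - y‖) 0 with hxy | hxy
        · show _ ≤ min ((C / R) ^ 2 * ‖x - y‖ ^ 2) 1 / ‖x - y‖ ^ p
          rw [hxy, Real.zero_rpow hp0.ne', div_zero, div_zero]
        · have hpos : (0 : ℝ) < ‖x - y‖ := lt_of_le_of_ne (norm_nonneg _) (Ne.symm hxy)
          have hdpos : (0 : ℝ) < ‖x - y‖ ^ p := Real.rpow_pos_of_pos hpos _
          exact (div_le_div_iff_of_pos_right hdpos).2 hnum
      calc (∫ y, (ψ R x - ψ R y) ^ 2 / ‖x - y‖ ^ p) ≤ ∫ y, g (x - y) := by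
            refine integral_mono_of_nonneg (Eventually.of_forall fun y => by positivity)
              (hgint.comp_sub_left x) (Eventually.of_forall hle)
        _ = ∫ z, g z := integral_sub_left_eq_self g volume x
        _ = R ^ (-(2 * s)) * S := hgval
    -- outer integral bound
    have hrw : ∀ x : E N, (∫ y, (u n x) ^ 2 * (ψ R x - ψ R y) ^ 2 / ‖x - y‖ ^ p)
        = (u n x) ^ 2 * ∫ y, (ψ R x - ψ R y) ^ 2 / ‖x - y‖ ^ p := by
      intro x
      simp_rw [mul_div_assoc]
      exact integral_const_mul _ _
    calc (∫ x, ∫ y, (u n x) ^ 2 * (ψ R x - ψ R y) ^ 2 / ‖x - y‖ ^ p)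
        ≤ ∫ x, (u n x) ^ 2 * (R ^ (-(2 * s)) * S) := by
          refine integral_mono_of_nonneg ?_ (((hmem n).1.integrable_sq).mul_const _) ?_
          · refine Eventually.of_forall fun x => ?_
            exact integral_nonneg fun y => by positivity
          · refine Eventually.of_forall fun x => ?_
            show (∫ y, (u n x) ^ 2 * (ψ R x - ψ R y) ^ 2 / ‖x - y‖ ^ p)
                ≤ (u n x) ^ 2 * (R ^ (-(2 * s)) * S)
            rw [hrw x]
            exact mul_le_mul_of_nonneg_left (inner_le x) (sq_nonneg _)
      _ = (∫ x, (u n x) ^ 2) * (R ^ (-(2 * s)) * S) := integral_mul_const _ _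
      _ ≤ C₀ * (R ^ (-(2 * s)) * S) := by
          refine mul_le_mul_of_nonneg_right (hu2 n) ?_
          exact mul_nonneg (Real.rpow_nonneg hR.le _) hS0
      _ = C₀ * S * R ^ (-(2 * s)) := by ring
  -- squeeze
  refine squeeze_zero' (g := fun R : ℝ => C₀ * S * R ^ (-(2 * s))) ?_ ?_ ?_
  · filter_upwards [eventually_gt_atTop (0 : ℝ)] with R hR
    refine Filter.le_limsup_of_frequently_le (Frequently.of_forall fun n => hΦnn R n) ?_
    exact ⟨C₀ * S * R ^ (-(2 * s)), eventually_map.2 (Eventually.of_forall (key R hR))⟩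
  · filter_upwards [eventually_gt_atTop (0 : ℝ)] with R hR
    refine Filter.limsup_le_of_le ?_ (Eventually.of_forall (key R hR))
    exact Filter.isCoboundedUnder_le_of_le atTop (fun n => hΦnn R n)
  · have h1 : Tendsto (fun R : ℝ => R ^ (-(2 * s))) atTop (𝓝 0) :=
      tendsto_rpow_neg_atTop (by linarith)
    have := h1.const_mul (C₀ * S)
    simpa using this
end
end

section
/- With the notation below, the barycenter map satisfies lim_{ε→0⁺} sup_{y ∈ M} |β_ε(Ψ_{ε,y}) − y| = 0; in particular, since β_ε(tΨ_{ε,y}) = β_ε(Ψ_{ε,y}) for every t > 0, one has β_ε(Φ_ε(y)) → y uniformly in y ∈ M for Φ_ε(y) = t_ε Ψ_{ε,y} with any scalars t_ε > 0. -/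
open MeasureTheory Filter Topology

noncomputable section

/-- The truncation map `Υ`. -/
def Ups (N : ℕ) (ρ : ℝ) (z : E N) : E N := if ‖z‖ ≤ ρ then z else (ρ / ‖z‖) • z

lemma ups_norm_le {N : ℕ} {ρ : ℝ} (hρ : 0 ≤ ρ) (z : E N) : ‖Ups N ρ z‖ ≤ ρ := by
  unfold Ups
  split_ifs with h
  · exact h
  · push_neg at h
    have hz : ‖z‖ ≠ 0 := (lt_of_le_of_lt hρ h).ne'
    rw [norm_smul, Real.norm_eq_abs, abs_div, abs_of_nonneg hρ, abs_norm,
      div_mul_cancel₀ _ hz]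

lemma ups_lip {N : ℕ} {ρ : ℝ} (hρ : 0 < ρ) {y : E N} (hy : ‖y‖ ≤ ρ) (a : E N) :
    ‖Ups N ρ a - y‖ ≤ ‖a - y‖ := by
  unfold Ups
  split_ifs with h
  · exact le_refl _
  · push_neg at h
    have hr0 : (0:ℝ) < ‖a‖ := lt_trans hρ h
    have hsq : ‖(ρ / ‖a‖) • a - y‖ ^ 2 ≤ ‖a - y‖ ^ 2 := by
      rw [norm_sub_sq_real, norm_sub_sq_real, real_inner_smul_left, norm_smul,
        Real.norm_eq_abs, abs_div, abs_of_nonneg hρ.le, abs_norm, div_mul_cancel₀ _ hr0.ne']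
      have hin : (inner ℝ a y : ℝ) ≤ ‖a‖ * ‖y‖ := real_inner_le_norm a y
      have h1 : (0:ℝ) ≤ ρ / ‖a‖ := by positivity
      have h2 : ρ / ‖a‖ ≤ 1 := by
        rw [div_le_one hr0]; exact h.le
      have hIρ : (inner ℝ a y : ℝ) ≤ ‖a‖ * ρ :=
        le_trans hin (by nlinarith [norm_nonneg a])
      have key : 2 * (inner ℝ a y : ℝ) * (1 - ρ / ‖a‖) ≤ 2 * (‖a‖ * ρ) * (1 - ρ / ‖a‖) :=
        mul_le_mul_of_nonneg_right (by linarith) (by linarith)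
      have hexp : 2 * (‖a‖ * ρ) * (1 - ρ / ‖a‖) = 2 * ρ * (‖a‖ - ρ) := by
        field_simp
      rw [hexp] at key
      nlinarith [key, sq_nonneg (‖a‖ - ρ)]
    have := Real.sqrt_le_sqrt hsq
    rwa [Real.sqrt_sq (norm_nonneg _), Real.sqrt_sq (norm_nonneg _)] at this

lemma ups_meas {N : ℕ} (ρ : ℝ) : Measurable (Ups N ρ) := by
  unfold Ups
  exact Measurable.ite (measurableSet_le measurable_norm measurable_const)
    measurable_id ((measurable_const.div measurable_norm).smul measurable_id)

set_option maxHeartbeats 1000000 in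
/-- The barycenter map satisfies `β_ε(t Ψ_{ε,y}) → y` uniformly in `y ∈ M`
(for any positive scalars `t`, since `β_ε` is scaling invariant). -/
theorem stmt19 (N : ℕ) (s : ℝ) (hs : s ∈ Set.Ioo (0 : ℝ) 1) (hN : 2 * s < (N : ℝ))
    (M : Set (E N)) (hMcp : IsCompact M) (hMne : M.Nonempty)
    (δ ρ : ℝ) (hδ : 0 < δ) (hρ : 0 < ρ)
    (w : E N → ℝ) (hw : memHs N s w) (hwpos : ∀ x, 0 < w x)
    (hwint : 0 < ∫ x, (w x) ^ 2)
    (η : ℝ → ℝ) (hηsm : ContDiff ℝ (⊤ : ℕ∞) η) (hη01 : ∀ t, η t ∈ Set.Icc (0 : ℝ) 1)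
    (hη1 : ∀ t ∈ Set.Icc (0 : ℝ) (δ / 2), η t = 1) (hη0 : ∀ t ≥ δ, η t = 0)
    (hMδρ : {x : E N | Metric.infDist x M ≤ δ} ⊆ Metric.ball (0 : E N) ρ) :
    ∀ η' > (0 : ℝ), ∃ ε₀ > (0 : ℝ), ∀ ε ∈ Set.Ioo (0 : ℝ) ε₀, ∀ y ∈ M,
      ∀ t > (0 : ℝ),
      ‖(∫ x, (t * (η ‖ε • x - y‖ * w (ε⁻¹ • (ε • x - y)))) ^ 2)⁻¹ •
          (∫ x, ((t * (η ‖ε • x - y‖ * w (ε⁻¹ • (ε • x - y)))) ^ 2) •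
            Ups N ρ (ε • x)) - y‖ < η' := by
  intro η' hη'
  have hwm : AEStronglyMeasurable w (volume : Measure (E N)) := hw.1.aestronglyMeasurable
  have hw2 : Integrable (fun z : E N => w z ^ 2) := hw.1.integrable_sq
  set I : ℝ := ∫ z : E N, w z ^ 2 with hIdef
  have hI0 : 0 < I := hwint
  set c : ℝ := ∫ z in Metric.closedBall (0 : E N) 1, w z ^ 2 with hcdef
  have hc0 : 0 < c := by
    rw [hcdef, setIntegral_pos_iff_support_of_nonneg_ae
      (ae_of_all _ fun z => sq_nonneg (w z)) hw2.integrableOn]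
    have hsupp : Function.support (fun z : E N => w z ^ 2) = Set.univ := by
      ext z; simp [Function.mem_support, pow_eq_zero_iff, (hwpos z).ne']
    rw [hsupp, Set.univ_inter]
    exact Metric.measure_closedBall_pos _ _ one_pos
  -- tail of w²
  have hmono : Monotone (fun n : ℕ => Metric.closedBall (0 : E N) n) := fun m n h =>
    Metric.closedBall_subset_closedBall (by exact_mod_cast h)
  have hunion : (⋃ n : ℕ, Metric.closedBall (0 : E N) n) = Set.univ := by
    ext z
    simp only [Set.mem_iUnion, Metric.mem_closedBall, dist_zero_right, Set.mem_univ, iff_true]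
    exact ⟨⌈‖z‖⌉₊, Nat.le_ceil _⟩
  have hseq : Tendsto (fun n : ℕ => ∫ z in Metric.closedBall (0 : E N) n, w z ^ 2)
      atTop (𝓝 I) := by
    have := tendsto_setIntegral_of_monotone (fun n : ℕ => measurableSet_closedBall) hmono
      (by rw [hunion]; exact hw2.integrableOn)
    rwa [hunion, setIntegral_univ] at this
  have htail : Tendsto (fun n : ℕ => ∫ z in (Metric.closedBall (0 : E N) n)ᶜ, w z ^ 2)
      atTop (𝓝 0) := by
    have heq : ∀ n : ℕ, (∫ z in (Metric.closedBall (0 : E N) n)ᶜ, w z ^ 2)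
        = I - ∫ z in Metric.closedBall (0 : E N) n, w z ^ 2 := by
      intro n
      rw [eq_sub_iff_add_eq, add_comm]
      exact integral_add_compl measurableSet_closedBall hw2
    simp only [heq]
    have h0 : Tendsto (fun n : ℕ => I - ∫ z in Metric.closedBall (0 : E N) n, w z ^ 2)
        atTop (𝓝 (I - I)) := tendsto_const_nhds.sub hseq
    simpa using h0
  obtain ⟨R, hR⟩ : ∃ R : ℕ,
      (∫ z in (Metric.closedBall (0 : E N) (R : ℝ))ᶜ, w z ^ 2) < η' * c / (4 * ρ) :=
    (htail.eventually (gt_mem_nhds (by positivity))).exists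
  set T : ℝ := ∫ z in (Metric.closedBall (0 : E N) (R : ℝ))ᶜ, w z ^ 2 with hTdef
  have hT0 : 0 ≤ T :=
    setIntegral_nonneg measurableSet_closedBall.compl (fun z _ => sq_nonneg _)
  set ε₀ : ℝ := min (δ / 2) ((η' * c / 2) / ((R : ℝ) * I + 1)) with hε₀def
  have hε₀pos : 0 < ε₀ := lt_min (by positivity) (by positivity)
  refine ⟨ε₀, hε₀pos, ?_⟩
  rintro ε ⟨hε0, hεε₀⟩ y hy t ht
  have hεne : ε ≠ 0 := hε0.ne'
  have hεδ : ε < δ / 2 := lt_of_lt_of_le hεε₀ (min_le_left _ _)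
  have hyρ : ‖y‖ < ρ := by
    have hmem : y ∈ {x : E N | Metric.infDist x M ≤ δ} := by
      simp only [Set.mem_setOf_eq, Metric.infDist_zero_of_mem hy]
      exact hδ.le
    simpa [Metric.mem_ball, dist_zero_right] using hMδρ hmem
  -- the shifted profile
  set g : E N → ℝ := fun z => (η ‖ε • z‖ * w z) ^ 2 with hgdef
  have hg_nonneg : ∀ z, 0 ≤ g z := fun z => sq_nonneg _
  have hg_le : ∀ z, g z ≤ w z ^ 2 := by
    intro z
    have h01 := hη01 ‖ε • z‖
    rw [hgdef]
    simp only [mul_pow]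
    have hη2 : η ‖ε • z‖ ^ 2 ≤ 1 := by nlinarith [h01.1, h01.2]
    nlinarith [hη2, sq_nonneg (w z)]
  have hg_meas : AEStronglyMeasurable g (volume : Measure (E N)) := by
    have hcont : Continuous fun z : E N => η ‖ε • z‖ :=
      hηsm.continuous.comp (continuous_norm.comp (continuous_const_smul ε))
    exact ((hcont.aestronglyMeasurable.mul hwm).pow 2)
  have hg_int : Integrable g := by
    refine hw2.mono' hg_meas (ae_of_all _ fun z => ?_)
    rw [Real.norm_eq_abs, abs_of_nonneg (hg_nonneg z)]
    exact hg_le z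
  set D : ℝ := ∫ z, g z with hDdef
  have hcD : c ≤ D := by
    have h1 : (∫ z in Metric.closedBall (0 : E N) 1, w z ^ 2)
        = ∫ z in Metric.closedBall (0 : E N) 1, g z := by
      refine setIntegral_congr_fun measurableSet_closedBall (fun z hz => ?_)
      have hz1 : ‖z‖ ≤ 1 := by simpa [dist_zero_right] using hz
      have hη1' : η ‖ε • z‖ = 1 := by
        apply hη1
        constructor
        · positivity
        · rw [norm_smul, Real.norm_eq_abs, abs_of_pos hε0]
          calc ε * ‖z‖ ≤ ε * 1 := by
                exact mul_le_mul_of_nonneg_left hz1 hε0.le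
            _ = ε := mul_one ε
            _ ≤ δ / 2 := hεδ.le
      rw [hgdef]
      simp [hη1']
    rw [hcdef, h1, hDdef]
    exact setIntegral_le_integral hg_int (ae_of_all _ hg_nonneg)
  have hD0 : 0 < D := lt_of_lt_of_le hc0 hcD
  set V : E N := ∫ z, g z • Ups N ρ (ε • z + y) with hVdef
  have hV_int : Integrable (fun z => g z • Ups N ρ (ε • z + y)) := by
    have hUm : AEStronglyMeasurable (fun z : E N => Ups N ρ (ε • z + y))
        (volume : Measure (E N)) :=
      ((ups_meas (N := N) ρ).comp
        (((measurable_id.const_smul ε).add_const y))).aestronglyMeasurable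
    refine (hw2.mul_const ρ).mono' (hg_meas.smul hUm) (ae_of_all _ fun z => ?_)
    rw [norm_smul, Real.norm_eq_abs, abs_of_nonneg (hg_nonneg z)]
    exact mul_le_mul (hg_le z) (ups_norm_le hρ.le _) (norm_nonneg _) (sq_nonneg _)
  -- identify the two integrals in the statement
  have hA : (∫ x, (t * (η ‖ε • x - y‖ * w (ε⁻¹ • (ε • x - y)))) ^ 2) = t ^ 2 * D := by
    have hfun : (fun x : E N => (t * (η ‖ε • x - y‖ * w (ε⁻¹ • (ε • x - y)))) ^ 2)
        = fun x => (fun z : E N => t ^ 2 * g z) (x - ε⁻¹ • y) := by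
      funext x
      have h1 : ε • x - y = ε • (x - ε⁻¹ • y) := by
        rw [smul_sub, smul_inv_smul₀ hεne]
      rw [h1, inv_smul_smul₀ hεne]
      rw [hgdef]
      ring
    rw [hfun, integral_sub_right_eq_self (fun z : E N => t ^ 2 * g z) (ε⁻¹ • y),
      integral_const_mul, hDdef]
  have hB : (∫ x, ((t * (η ‖ε • x - y‖ * w (ε⁻¹ • (ε • x - y)))) ^ 2) • Ups N ρ (ε • x))
      = t ^ 2 • V := by
    have hfun : (fun x : E N =>
          ((t * (η ‖ε • x - y‖ * w (ε⁻¹ • (ε • x - y)))) ^ 2) • Ups N ρ (ε • x))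
        = fun x => (fun z : E N => t ^ 2 • (g z • Ups N ρ (ε • z + y))) (x - ε⁻¹ • y) := by
      funext x
      have h1 : ε • x - y = ε • (x - ε⁻¹ • y) := by
        rw [smul_sub, smul_inv_smul₀ hεne]
      have h2 : ε • (x - ε⁻¹ • y) + y = ε • x := by
        rw [← h1]; abel
      show _ = t ^ 2 • (g (x - ε⁻¹ • y) • Ups N ρ (ε • (x - ε⁻¹ • y) + y))
      rw [h2, h1, inv_smul_smul₀ hεne, smul_smul]
      congr 1
      simp only [hgdef]
      ring
    rw [hfun, integral_sub_right_eq_self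
      (fun z : E N => t ^ 2 • (g z • Ups N ρ (ε • z + y))) (ε⁻¹ • y),
      integral_smul, hVdef]
  rw [hA, hB]
  have hsimp : (t ^ 2 * D)⁻¹ • (t ^ 2 • V) = D⁻¹ • V := by
    rw [smul_smul]
    congr 1
    field_simp
  rw [hsimp]
  -- main estimate
  have hkey : D⁻¹ • V - y = D⁻¹ • (V - D • y) := by
    rw [smul_sub, smul_smul, inv_mul_cancel₀ hD0.ne', one_smul]
  have hVDy : V - D • y = ∫ z, g z • (Ups N ρ (ε • z + y) - y) := by
    have : (fun z : E N => g z • (Ups N ρ (ε • z + y) - y))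
        = fun z => g z • Ups N ρ (ε • z + y) - g z • y := by
      funext z; rw [smul_sub]
    rw [this, integral_sub hV_int (hg_int.smul_const y), integral_smul_const, hVdef, hDdef]
  -- bound the numerator
  set bound : E N → ℝ := fun z => w z ^ 2 * min (ε * ‖z‖) (2 * ρ) with hbdef
  have hmin_nonneg : ∀ z : E N, 0 ≤ min (ε * ‖z‖) (2 * ρ) := fun z =>
    le_min (by positivity) (by positivity)
  have hbound_meas : AEStronglyMeasurable bound (volume : Measure (E N)) := by
    exact (hwm.pow 2).mul
      ((continuous_const.mul continuous_norm).min continuous_const).aestronglyMeasurable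
  have hbound_int : Integrable bound := by
    refine (hw2.mul_const (2 * ρ)).mono' hbound_meas (ae_of_all _ fun z => ?_)
    rw [Real.norm_eq_abs, abs_of_nonneg (by positivity)]
    exact mul_le_mul_of_nonneg_left (min_le_right _ _) (sq_nonneg _)
  have hptwise : ∀ z : E N, ‖g z • (Ups N ρ (ε • z + y) - y)‖ ≤ bound z := by
    intro z
    rw [norm_smul, Real.norm_eq_abs, abs_of_nonneg (hg_nonneg z)]
    have hU1 : ‖Ups N ρ (ε • z + y) - y‖ ≤ ε * ‖z‖ := by
      have := ups_lip hρ hyρ.le (ε • z + y)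
      simpa [norm_smul, abs_of_pos hε0] using this
    have hU2 : ‖Ups N ρ (ε • z + y) - y‖ ≤ 2 * ρ := by
      calc ‖Ups N ρ (ε • z + y) - y‖ ≤ ‖Ups N ρ (ε • z + y)‖ + ‖y‖ := norm_sub_le _ _
        _ ≤ ρ + ρ := add_le_add (ups_norm_le hρ.le _) hyρ.le
        _ = 2 * ρ := by ring
    exact mul_le_mul (hg_le z) (le_min hU1 hU2) (norm_nonneg _) (sq_nonneg _)
  have hnum : ‖V - D • y‖ ≤ ∫ z, bound z := by
    rw [hVDy]
    calc ‖∫ z, g z • (Ups N ρ (ε • z + y) - y)‖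
        ≤ ∫ z, ‖g z • (Ups N ρ (ε • z + y) - y)‖ := norm_integral_le_integral_norm _
      _ ≤ ∫ z, bound z := by
          have hint : Integrable (fun z => g z • (Ups N ρ (ε • z + y) - y)) := by
            have := hV_int.sub (hg_int.smul_const y)
            refine this.congr (ae_of_all _ fun z => ?_)
            simp [smul_sub]
          exact integral_mono hint.norm hbound_int hptwise
  -- split the bound integral
  have hsplit : (∫ z, bound z)
      = (∫ z in Metric.closedBall (0 : E N) (R : ℝ), bound z)
        + ∫ z in (Metric.closedBall (0 : E N) (R : ℝ))ᶜ, bound z :=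
    (integral_add_compl measurableSet_closedBall hbound_int).symm
  have hJ1 : (∫ z in Metric.closedBall (0 : E N) (R : ℝ), bound z) ≤ ε * R * I := by
    calc (∫ z in Metric.closedBall (0 : E N) (R : ℝ), bound z)
        ≤ ∫ z in Metric.closedBall (0 : E N) (R : ℝ), w z ^ 2 * (ε * R) := by
          refine setIntegral_mono_on hbound_int.integrableOn
            ((hw2.mul_const (ε * R)).integrableOn) measurableSet_closedBall
            (fun z hz => ?_)
          have hzR : ‖z‖ ≤ (R : ℝ) := by simpa [dist_zero_right] using hz
          refine mul_le_mul_of_nonneg_left (le_trans (min_le_left _ _) ?_) (sq_nonneg _)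
          exact mul_le_mul_of_nonneg_left hzR hε0.le
      _ = (∫ z in Metric.closedBall (0 : E N) (R : ℝ), w z ^ 2) * (ε * R) := by
          rw [integral_mul_const]
      _ ≤ I * (ε * R) := by
          refine mul_le_mul_of_nonneg_right
            (setIntegral_le_integral hw2 (ae_of_all _ fun z => sq_nonneg _)) (by positivity)
      _ = ε * R * I := by ring
  have hJ2 : (∫ z in (Metric.closedBall (0 : E N) (R : ℝ))ᶜ, bound z) ≤ 2 * ρ * T := by
    calc (∫ z in (Metric.closedBall (0 : E N) (R : ℝ))ᶜ, bound z)
        ≤ ∫ z in (Metric.closedBall (0 : E N) (R : ℝ))ᶜ, w z ^ 2 * (2 * ρ) := by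
          refine setIntegral_mono_on hbound_int.integrableOn
            ((hw2.mul_const (2 * ρ)).integrableOn) measurableSet_closedBall.compl
            (fun z _ => mul_le_mul_of_nonneg_left (min_le_right _ _) (sq_nonneg _))
      _ = T * (2 * ρ) := by rw [integral_mul_const]
      _ = 2 * ρ * T := by ring
  -- combine
  have hεRI : ε * R * I < η' * c / 2 := by
    have h1 : ε * ((R : ℝ) * I + 1) < ε₀ * ((R : ℝ) * I + 1) :=
      mul_lt_mul_of_pos_right hεε₀ (by positivity)
    have h2 : ε₀ * ((R : ℝ) * I + 1) ≤ η' * c / 2 := by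
      have h3 : ε₀ ≤ (η' * c / 2) / ((R : ℝ) * I + 1) := min_le_right _ _
      calc ε₀ * ((R : ℝ) * I + 1)
          ≤ ((η' * c / 2) / ((R : ℝ) * I + 1)) * ((R : ℝ) * I + 1) :=
            mul_le_mul_of_nonneg_right h3 (by positivity)
        _ = η' * c / 2 := by field_simp
    nlinarith [hε0, Nat.cast_nonneg (α := ℝ) R, hI0]
  have hρT : 2 * ρ * T < η' * c / 2 := by
    have := mul_lt_mul_of_pos_left hR (show (0:ℝ) < 2 * ρ by positivity)
    calc 2 * ρ * T < 2 * ρ * (η' * c / (4 * ρ)) := this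
      _ = η' * c / 2 := by field_simp; ring
  have hnum' : ‖V - D • y‖ < η' * c := by
    calc ‖V - D • y‖ ≤ ∫ z, bound z := hnum
      _ = _ := hsplit
      _ < η' * c / 2 + η' * c / 2 := add_lt_add_of_le_of_lt (le_trans hJ1 hεRI.le) (lt_of_le_of_lt hJ2 hρT)
      _ = η' * c := by ring
  calc ‖D⁻¹ • V - y‖ = D⁻¹ * ‖V - D • y‖ := by
        rw [hkey, norm_smul, Real.norm_eq_abs, abs_of_pos (by positivity)]
    _ ≤ c⁻¹ * ‖V - D • y‖ :=
        mul_le_mul_of_nonneg_right (by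
          exact inv_anti₀ hc0 hcD) (norm_nonneg _)
    _ < c⁻¹ * (η' * c) := by
        exact mul_lt_mul_of_pos_left hnum' (by positivity)
    _ = η' := by field_simp
end
end
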